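/- Every 2×2 real matrix P with strictly positive entries admits a factorization P = B·Cᵀ where B and C are 2×2 real matrices with strictly positive entries. -/

import Mathlib

/-!
Take `C = !![1, e; e, 1]` with `0 < e < 1` and `B = P C⁻¹`, so that `B Cᵀ = P C⁻¹ C = P`.
Row `i` of `B` is `(P i 0 - e P i 1, P i 1 - e P i 0) / (1 - e²)`, which is positive once `e` is
smaller than every ratio of two entries of `P` in the same row.
-/

open Filter Topology
open scoped Matrix

section
variable {K : Type*} [Field K]

theorem Matrix.inv_fin_two_symm (e : K) :
    !![1, e; e, 1]⁻¹ = (1 - e ^ 2)⁻¹ • !![1, -e; -e, 1] := by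
  rw [Matrix.inv_def, Matrix.det_fin_two_of, Matrix.adjugate_fin_two_of, Ring.inverse_eq_inv']
  congr 1
  ring

variable [LinearOrder K] [IsStrictOrderedRing K]

theorem exists_pos_lt_one_forall_mul_lt [TopologicalSpace K] [OrderTopology K]
    {ι : Type*} [Finite ι] {x : ι → K} (hx : ∀ i, 0 < x i) :
    ∃ e : K, 0 < e ∧ e < 1 ∧ ∀ i j, e * x i < x j := by
  have hsmall : ∀ i j, ∀ᶠ e in 𝓝[>] (0 : K), e * x i < x j := fun i j =>
    (((continuous_id.mul continuous_const).tendsto' 0 0 (zero_mul _)).mono_left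
      nhdsWithin_le_nhds).eventually (gt_mem_nhds (hx j))
  have hunit : ∀ᶠ e in 𝓝[>] (0 : K), 0 < e ∧ e < 1 := Ioo_mem_nhdsGT zero_lt_one
  obtain ⟨e, ⟨he0, he1⟩, he⟩ :=
    (hunit.and (eventually_all.2 fun i => eventually_all.2 (hsmall i))).exists
  exact ⟨e, he0, he1, he⟩

theorem Matrix.mul_inv_fin_two_symm_pos {e : K} (he0 : 0 < e) (he1 : e < 1)
    {P : Matrix (Fin 2) (Fin 2) K} (hP : ∀ i j k, e * P i j < P i k) (i j : Fin 2) :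
    0 < (P * !![1, e; e, 1]⁻¹) i j := by
  have hdet : 0 < 1 - e ^ 2 := by nlinarith
  rw [Matrix.inv_fin_two_symm, Matrix.mul_smul, Matrix.smul_apply, smul_eq_mul]
  refine mul_pos (inv_pos.2 hdet) ?_
  fin_cases j <;> simp [Matrix.mul_apply, Fin.sum_univ_two] <;> linarith [hP i 0 1, hP i 1 0]

end

theorem stmt_9 (P : Matrix (Fin 2) (Fin 2) ℝ) (hpos : ∀ i j, 0 < P i j) :
    ∃ B C : Matrix (Fin 2) (Fin 2) ℝ,
      (∀ i j, 0 < B i j) ∧ (∀ i j, 0 < C i j) ∧ P = B * C.transpose := by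
  obtain ⟨e, he0, he1, hsmall⟩ :=
    exists_pos_lt_one_forall_mul_lt (x := fun ij : Fin 2 × Fin 2 => P ij.1 ij.2) fun _ => hpos _ _
  set C : Matrix (Fin 2) (Fin 2) ℝ := !![1, e; e, 1] with hC
  have hCt : Cᵀ = C := by rw [hC, ← Matrix.transposeᵣ_eq]; rfl
  have hCdet : IsUnit C.det := by
    rw [hC, Matrix.det_fin_two_of]
    exact (by nlinarith : (0 : ℝ) < 1 * 1 - e * e).ne'.isUnit
  refine ⟨P * C⁻¹, C, Matrix.mul_inv_fin_two_symm_pos he0 he1 fun i j k => hsmall (i, j) (i, k),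
    fun i j => ?_, ?_⟩
  · fin_cases i <;> fin_cases j <;> simp [hC, he0]
  · rw [hCt, Matrix.nonsing_inv_mul_cancel_right _ _ hCdet]
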